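/- Let α, β be real numbers and set μ := α + β, ν := α − β. Then in ℝ[[q]]: 2·(∑_{n≥1} cos((4n−2)α) q^{2n²−2n})·(∑_{n≥1} cos((4n−2)β) q^{2n²−2n}) = (1 + 2∑_{n≥1} cos(4nμ) q^{4n²})·(∑_{n≥1} cos((4n−2)ν) q^{4n²−4n}) + (1 + 2∑_{n≥1} cos(4nν) q^{4n²})·(∑_{n≥1} cos((4n−2)μ) q^{4n²−4n}). -/

import Mathlib

/-!
Write `θ_d(t) = ∑_{m ∈ ℤ} e^{i(4m+2)t} q^{d m(m+1)}` and `φ(t) = ∑_{a ∈ ℤ} e^{4iat} q^{4a²}`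
in `ℂ[[q]]`. Pairing `m` with `-1 - m` and `a` with `-a` shows that the left-hand side of the
identity is `θ₂(α) θ₂(β) / 2` and the right-hand side is `(φ(μ) θ₄(ν) + φ(ν) θ₄(μ)) / 2`.
The product `θ₂(α) θ₂(β)` is a sum over `(m, n) ∈ ℤ²`; substituting `(x, y) = (m + n + 1, m - n)`,
a bijection onto the lattice points with `x + y` odd, its general term becomes
`e^{2i(xμ + yν)} q^{x² + y² - 1}`. Splitting according to which of `x`, `y` is even gives
`φ(μ) θ₄(ν) + φ(ν) θ₄(μ)`.
-/

/-- The formal power series `∑_{n ≥ 1} c(n) q^{e(n)}` in `ℝ[[q]]`, defined coefficientwise.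
(For each exponent function `e` used here, any `n ≥ 1` with `e n = k` satisfies `n ≤ k + 1`,
so the truncated range captures every term.) -/
noncomputable def mkSum (e : ℕ → ℕ) (c : ℕ → ℝ) : PowerSeries ℝ :=
  PowerSeries.mk fun k => ∑ n ∈ Finset.range (k + 2), if 1 ≤ n ∧ e n = k then c n else 0

open PowerSeries

def FiniteSublevels {ι : Type*} (e : ι → ℕ) : Prop := ∀ k, {i | e i ≤ k}.Finite

namespace FiniteSublevels

variable {ι κ : Type*} {e : ι → ℕ}

lemma finite_fiber (he : FiniteSublevels e) (k : ℕ) : (e ⁻¹' {k}).Finite :=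
  (he k).subset fun _ hi => le_of_eq hi

lemma comp_injective (he : FiniteSublevels e) {g : κ → ι} (hg : g.Injective) :
    FiniteSublevels (e ∘ g) :=
  fun k => (he k).preimage hg.injOn

lemma add {f : κ → ℕ} (he : FiniteSublevels e) (hf : FiniteSublevels f) :
    FiniteSublevels fun p : ι × κ => e p.1 + f p.2 :=
  fun k => ((he k).prod (hf k)).subset fun p (hp : e p.1 + f p.2 ≤ k) =>
    ⟨show e p.1 ≤ k by omega, show f p.2 ≤ k by omega⟩

lemma of_self_le {e : ℕ → ℕ} (h : ∀ n, n ≤ e n) : FiniteSublevels e :=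
  fun k => (Set.finite_Iic k).subset fun n (hn : e n ≤ k) => (h n).trans hn

lemma of_natAbs_le {e : ℤ → ℕ} (h : ∀ m, m.natAbs ≤ e m + 1) : FiniteSublevels e :=
  fun k => (Set.finite_Icc (-(k + 1 : ℤ)) (k + 1)).subset fun m (hm : e m ≤ k) => by
    have := h m
    simp only [Set.mem_Icc]
    omega

end FiniteSublevels

noncomputable def monomialSum {ι R : Type*} [Semiring R] (e : ι → ℕ) (c : ι → R) : R⟦X⟧ :=
  mk fun k => ∑ᶠ i ∈ e ⁻¹' {k}, c i

section monomialSum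

variable {ι κ R : Type*} [Semiring R] {e : ι → ℕ} {f : κ → ℕ}

lemma coeff_monomialSum (c : ι → R) (k : ℕ) :
    coeff k (monomialSum e c) = ∑ᶠ i ∈ e ⁻¹' {k}, c i :=
  coeff_mk _ _

lemma monomialSum_comp_equiv (σ : κ ≃ ι) (c : ι → R) :
    monomialSum (e ∘ σ) (c ∘ σ) = monomialSum e c := by
  ext k
  simp only [coeff_monomialSum]
  exact finsum_comp_equiv σ (f := fun i => ∑ᶠ (_ : i ∈ e ⁻¹' {k}), c i)

lemma monomialSum_sum_elim (he : FiniteSublevels e) (hf : FiniteSublevels f)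
    (c : ι → R) (d : κ → R) :
    monomialSum (Sum.elim e f) (Sum.elim c d) = monomialSum e c + monomialSum f d := by
  ext k
  have hfiber : Sum.elim e f ⁻¹' {k} = Sum.inl '' (e ⁻¹' {k}) ∪ Sum.inr '' (f ⁻¹' {k}) := by
    ext (i | j) <;> simp
  rw [map_add, coeff_monomialSum, coeff_monomialSum, coeff_monomialSum, hfiber,
    finsum_mem_union Set.disjoint_image_inl_image_inr ((he.finite_fiber k).image _)
      ((hf.finite_fiber k).image _),
    finsum_mem_image Sum.inl_injective.injOn, finsum_mem_image Sum.inr_injective.injOn]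
  rfl

lemma monomialSum_eq_add_of_sumEquiv {κ' : Type*} (σ : κ ⊕ κ' ≃ ι) (he : FiniteSublevels e)
    (c : ι → R) :
    monomialSum e c = monomialSum (e ∘ σ ∘ .inl) (c ∘ σ ∘ .inl) +
      monomialSum (e ∘ σ ∘ .inr) (c ∘ σ ∘ .inr) := by
  rw [← monomialSum_comp_equiv σ,
    ← monomialSum_sum_elim (he.comp_injective (σ.injective.comp Sum.inl_injective))
      (he.comp_injective (σ.injective.comp Sum.inr_injective))]
  congr 1 <;> funext j <;> rcases j with j | j <;> rfl

lemma monomialSum_unique [Unique ι] (c : ι → R) :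
    monomialSum e c = monomial (e default) (c default) := by
  ext k
  classical
  rw [coeff_monomialSum, coeff_monomial, finsum_unique, finsum_eq_if]
  simp [eq_comm]

lemma monomialSum_int {e : ℤ → ℕ} (he : FiniteSublevels e) (c : ℤ → R) :
    monomialSum e c = monomialSum (fun n : ℕ => e n) (fun n => c n) +
      monomialSum (fun n : ℕ => e (-(n + 1))) (fun n => c (-(n + 1))) :=
  monomialSum_eq_add_of_sumEquiv Equiv.intEquivNatSumNat.symm he c

lemma monomialSum_nat {e : ℕ → ℕ} (he : FiniteSublevels e) (c : ℕ → R) :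
    monomialSum e c =
      monomial (e 0) (c 0) + monomialSum (fun n => e (n + 1)) (fun n => c (n + 1)) := by
  rw [monomialSum_eq_add_of_sumEquiv Equiv.natSumPUnitEquivNat.{0} he,
    monomialSum_unique (ι := PUnit), add_comm]
  rfl

lemma monomialSum_add (he : FiniteSublevels e) (c d : ι → R) :
    monomialSum e c + monomialSum e d = monomialSum e (c + d) := by
  ext k
  simp only [map_add, coeff_monomialSum, Pi.add_apply,
    finsum_mem_add_distrib (he.finite_fiber k)]

lemma C_mul_monomialSum (he : FiniteSublevels e) (a : R) (c : ι → R) :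
    C a * monomialSum e c = monomialSum e (fun i => a * c i) := by
  ext k
  rw [coeff_C_mul, coeff_monomialSum, coeff_monomialSum, mul_finsum_mem' _ _ (he.finite_fiber k)]

lemma map_monomialSum {S : Type*} [Semiring S] (φ : R →+* S) (he : FiniteSublevels e)
    (c : ι → R) : map φ (monomialSum e c) = monomialSum e (φ ∘ c) := by
  ext k
  rw [coeff_map, coeff_monomialSum, coeff_monomialSum]
  exact AddMonoidHom.map_finsum_mem _ φ.toAddMonoidHom (he.finite_fiber k)

lemma monomialSum_mul (he : FiniteSublevels e) (hf : FiniteSublevels f) (c : ι → R)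
    (d : κ → R) :
    monomialSum e c * monomialSum f d =
      monomialSum (fun p : ι × κ => e p.1 + f p.2) (fun p => c p.1 * d p.2) := by
  ext k
  have hfiber : (fun p : ι × κ => e p.1 + f p.2) ⁻¹' {k} =
      ⋃ ab ∈ (Finset.HasAntidiagonal.antidiagonal k : Set (ℕ × ℕ)),
        (e ⁻¹' {ab.1}) ×ˢ (f ⁻¹' {ab.2}) := by
    ext p
    simp
  have hdisj : (Finset.HasAntidiagonal.antidiagonal k : Set (ℕ × ℕ)).PairwiseDisjoint
      fun ab => (e ⁻¹' {ab.1}) ×ˢ (f ⁻¹' {ab.2}) := by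
    intro ab _ ab' _ hne
    refine Set.disjoint_left.2 fun p hp hp' => hne ?_
    simp only [Set.mem_prod, Set.mem_preimage, Set.mem_singleton_iff] at hp hp'
    exact Prod.ext (hp.1.symm.trans hp'.1) (hp.2.symm.trans hp'.2)
  rw [coeff_mul, coeff_monomialSum, hfiber, finsum_mem_biUnion hdisj (Finset.finite_toSet _)
    fun ab _ => (he.finite_fiber _).prod (hf.finite_fiber _), finsum_mem_coe_finset]
  refine Finset.sum_congr rfl fun ab _ => ?_
  rw [coeff_monomialSum, coeff_monomialSum,
    finsum_mem_eq_finite_toFinset_sum _ (he.finite_fiber _),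
    finsum_mem_eq_finite_toFinset_sum _ (hf.finite_fiber _),
    finsum_mem_eq_finite_toFinset_sum _ ((he.finite_fiber _).prod (hf.finite_fiber _)),
    ← Set.Finite.toFinset_prod, Finset.sum_mul_sum, Finset.sum_product]

end monomialSum

open Complex

lemma mkSum_eq_monomialSum {e : ℕ → ℕ} (he : ∀ n, n ≤ e (n + 1)) (c : ℕ → ℝ) :
    mkSum e c = monomialSum (fun n => e (n + 1)) (fun n => c (n + 1)) := by
  ext k
  have hfiber : (fun n => e (n + 1)) ⁻¹' {k} =
      ↑((Finset.range (k + 1)).filter fun n => e (n + 1) = k) := by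
    ext n
    have := he n
    simp only [Set.mem_preimage, Set.mem_singleton_iff, Finset.coe_filter, Finset.mem_range,
      Set.mem_ofPred_eq]
    omega
  rw [mkSum, coeff_mk, coeff_monomialSum, hfiber, finsum_mem_coe_finset, Finset.sum_filter,
    Finset.sum_range_succ']
  simp

lemma monomialSum_exp_add_exp_neg {ι : Type*} {e : ι → ℕ} (he : FiniteSublevels e) (x : ι → ℝ) :
    monomialSum e (fun i => exp (x i * I)) + monomialSum e (fun i => exp (-x i * I)) =
      2 * map ofRealHom (monomialSum e fun i => Real.cos (x i)) := by
  rw [monomialSum_add he, map_monomialSum _ he, ← map_ofNat C 2, C_mul_monomialSum he]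
  congr 1
  funext i
  simp [two_cos]

def pronic (m : ℤ) : ℕ := (m * (m + 1)).toNat

lemma natCast_pronic (m : ℤ) : (pronic m : ℤ) = m * (m + 1) :=
  Int.toNat_of_nonneg (by rcases le_or_gt 0 m with h | h <;> nlinarith)

lemma pronic_natCast (n : ℕ) : pronic n = n * (n + 1) := by
  zify
  rw [natCast_pronic]

lemma pronic_neg_natCast_sub_one (n : ℕ) : pronic (-(n + 1)) = n * (n + 1) := by
  zify
  rw [natCast_pronic]
  ring

lemma finiteSublevels_mul_pronic {d : ℕ} (hd : d ≠ 0) : FiniteSublevels fun m => d * pronic m :=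
  FiniteSublevels.of_natAbs_le fun m => by
    zify
    rw [natCast_pronic]
    have hd : (1 : ℤ) ≤ d := by omega
    have hpos : 0 ≤ m * (m + 1) := by rcases le_or_gt 0 m with h | h <;> nlinarith
    rcases abs_cases m with ⟨h, _⟩ | ⟨h, _⟩ <;> rw [h] <;>
      nlinarith [mul_le_mul_of_nonneg_right hd hpos]

lemma finiteSublevels_four_mul_natAbs_sq : FiniteSublevels fun a : ℤ => 4 * a.natAbs ^ 2 :=
  FiniteSublevels.of_natAbs_le fun a => by nlinarith

noncomputable def evenTheta (t : ℝ) : ℂ⟦X⟧ :=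
  monomialSum (fun a : ℤ => 4 * a.natAbs ^ 2) fun a => exp (↑(4 * a * t) * I)

noncomputable def oddTheta (d : ℕ) (t : ℝ) : ℂ⟦X⟧ :=
  monomialSum (fun m : ℤ => d * pronic m) fun m => exp (↑((4 * m + 2) * t) * I)

lemma evenTheta_eq (t : ℝ) :
    evenTheta t =
      1 + 2 * map ofRealHom (mkSum (fun n => 4 * n ^ 2) fun n => Real.cos (4 * n * t)) := by
  have hE : FiniteSublevels fun n : ℕ => 4 * (n + 1) ^ 2 :=
    FiniteSublevels.of_self_le fun n => by nlinarith
  rw [evenTheta, monomialSum_int finiteSublevels_four_mul_natAbs_sq,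
    monomialSum_nat (e := fun n : ℕ => 4 * (n : ℤ).natAbs ^ 2)
      (finiteSublevels_four_mul_natAbs_sq.comp_injective Nat.cast_injective),
    add_assoc, mkSum_eq_monomialSum (fun n => by nlinarith),
    ← monomialSum_exp_add_exp_neg hE]
  congr 1
  · simp
  congr 2
  funext n
  refine congrArg exp ?_
  push_cast
  ring

lemma oddTheta_eq {d : ℕ} (hd : d ≠ 0) (t : ℝ) :
    oddTheta d t = 2 * map ofRealHom
      (mkSum (fun n => d * n ^ 2 - d * n) fun n => Real.cos ((4 * n - 2) * t)) := by
  have hexp : ∀ n : ℕ, d * (n + 1) ^ 2 - d * (n + 1) = d * (n * (n + 1)) := fun n =>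
    Nat.sub_eq_of_eq_add (by ring)
  have hle : ∀ n : ℕ, n ≤ d * (n + 1) ^ 2 - d * (n + 1) := fun n => by
    rw [hexp]
    exact (Nat.le_mul_of_pos_right n n.succ_pos).trans
      (Nat.le_mul_of_pos_left _ (Nat.pos_of_ne_zero hd))
  rw [oddTheta, monomialSum_int (finiteSublevels_mul_pronic hd), mkSum_eq_monomialSum hle,
    ← monomialSum_exp_add_exp_neg (FiniteSublevels.of_self_le hle)]
  congr 2 <;> funext n
  · rw [hexp, pronic_natCast]
  · refine congrArg exp ?_
    push_cast
    ring
  · rw [hexp, pronic_neg_natCast_sub_one]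
  · refine congrArg exp ?_
    push_cast
    ring

/-- `inl (a, b)` and `inr (a, b)` go to the `(m, n)` with `(m + n + 1, m - n)` equal to
`(2a, 2b + 1)` and `(2b + 1, 2a)` respectively. -/
def latticeParityEquiv : (ℤ × ℤ) ⊕ (ℤ × ℤ) ≃ ℤ × ℤ where
  toFun := Sum.elim (fun p => (p.1 + p.2, p.1 - p.2 - 1)) (fun p => (p.1 + p.2, p.2 - p.1))
  invFun p := if Even (p.1 + p.2) then .inr ((p.1 - p.2) / 2, (p.1 + p.2) / 2)
    else .inl ((p.1 + p.2 + 1) / 2, (p.1 - p.2 - 1) / 2)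
  left_inv := by
    rintro (⟨a, b⟩ | ⟨a, b⟩) <;> simp only [Sum.elim_inl, Sum.elim_inr, Int.even_iff]
    · rw [if_neg (by omega)]
      congr 2 <;> omega
    · rw [if_pos (by omega)]
      congr 2 <;> omega
  right_inv := by
    rintro ⟨m, n⟩
    simp only [Int.even_iff]
    split_ifs <;> simp only [Sum.elim_inl, Sum.elim_inr, Prod.mk.injEq] <;> omega

lemma oddTheta_mul_oddTheta (α β : ℝ) :
    oddTheta 2 α * oddTheta 2 β =
      evenTheta (α + β) * oddTheta 4 (α - β) + evenTheta (α - β) * oddTheta 4 (α + β) := by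
  have h2 := finiteSublevels_mul_pronic two_ne_zero
  have h4 := finiteSublevels_mul_pronic four_ne_zero
  have h0 := finiteSublevels_four_mul_natAbs_sq
  simp only [oddTheta, evenTheta]
  rw [monomialSum_mul h2 h2, monomialSum_eq_add_of_sumEquiv latticeParityEquiv (h2.add h2),
    monomialSum_mul h0 h4, monomialSum_mul h0 h4]
  congr 2 <;> funext ⟨a, b⟩ <;>
    simp only [Function.comp_apply, latticeParityEquiv, Equiv.coe_fn_mk, Sum.elim_inl,
      Sum.elim_inr]
  · zify
    simp only [natCast_pronic, sq_abs]
    ring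
  · rw [← exp_add, ← exp_add]
    refine congrArg exp ?_
    push_cast
    ring
  · zify
    simp only [natCast_pronic, sq_abs]
    ring
  · rw [← exp_add, ← exp_add]
    refine congrArg exp ?_
    push_cast
    ring

/-- For real `α, β` with `μ := α + β` and `ν := α - β`, in `ℝ[[q]]`:
`2 (∑ cos((4n-2)α) q^{2n²-2n})(∑ cos((4n-2)β) q^{2n²-2n})
  = (1 + 2∑ cos(4nμ) q^{4n²})(∑ cos((4n-2)ν) q^{4n²-4n})
    + (1 + 2∑ cos(4nν) q^{4n²})(∑ cos((4n-2)μ) q^{4n²-4n})`. -/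
theorem cos_dissection_odd (α β : ℝ) :
    2 * ((mkSum (fun n => 2 * n ^ 2 - 2 * n) fun n => Real.cos ((4 * n - 2) * α)) *
      (mkSum (fun n => 2 * n ^ 2 - 2 * n) fun n => Real.cos ((4 * n - 2) * β))) =
    (1 + 2 * mkSum (fun n => 4 * n ^ 2) fun n => Real.cos (4 * n * (α + β))) *
      (mkSum (fun n => 4 * n ^ 2 - 4 * n) fun n => Real.cos ((4 * n - 2) * (α - β))) +
    (1 + 2 * mkSum (fun n => 4 * n ^ 2) fun n => Real.cos (4 * n * (α - β))) *
      (mkSum (fun n => 4 * n ^ 2 - 4 * n) fun n => Real.cos ((4 * n - 2) * (α + β))) := by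
  have key := oddTheta_mul_oddTheta α β
  rw [oddTheta_eq two_ne_zero, oddTheta_eq two_ne_zero, oddTheta_eq four_ne_zero,
    oddTheta_eq four_ne_zero, evenTheta_eq, evenTheta_eq] at key
  have h2 : (2 : ℂ⟦X⟧) ≠ 0 := fun h => by
    have := congrArg constantCoeff h
    rw [map_ofNat, map_zero] at this
    norm_num at this
  apply map_injective ofRealHom ofReal_injective
  apply mul_left_cancel₀ h2
  simp only [map_mul, map_add, map_one, map_ofNat]
  linear_combination key
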